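/- arXiv:2005.04784 — 2 statements merged into one kernel-verified Lean document; each statement's English description precedes it below -/
import Mathlib

section
/- For a ≤ c < d ≤ b, u ∈ C¹([a,b]), F continuous nonnegative, p > 1, ε > 0: ∫_c^d [ε^{p-1}|u'|^p/p + F(u)/ε] dx ≥ |∫_{u(c)}^{u(d)} (p F(s)/(p-1))^{(p-1)/p} ds|. -/
/-!
Apply Young's inequality `ab ≤ a^p/p + b^q/q`, with `q = p/(p-1)` and the factor `ε` distributed
between `a = ε^{1/q}|u'|` and `b = (qF(u)/ε)^{1/q}`: the energy density dominates
`|u'| (qF(u))^{1/q}` pointwise. Integrating over `[c, d]` and substituting `s = u(x)` bounds the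
left-hand side by `∫ |u'| g(u)`, since `|∫_{u(c)}^{u(d)} g| = |∫_c^d u' g(u)|`.
-/

open Set MeasureTheory intervalIntegral

theorem mul_rpow_le_young_of_eps {p ε A B : ℝ} (hp : 1 < p) (hε : 0 < ε) (hA : 0 ≤ A)
    (hB : 0 ≤ B) :
    A * (p * B / (p - 1)) ^ ((p - 1) / p) ≤ ε ^ (p - 1) * A ^ p / p + B / ε := by
  obtain ⟨q, hq⟩ : ∃ q, q = p / (p - 1) := ⟨_, rfl⟩
  have hpq : p.HolderConjugate q := hq ▸ .conjExponent hp
  have hq₀ : q ≠ 0 := hpq.symm.ne_zero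
  have hqB : 0 ≤ q * B / ε := div_nonneg (mul_nonneg hpq.symm.nonneg hB) hε.le
  have hεq : 0 ≤ ε ^ q⁻¹ := Real.rpow_nonneg hε.le _
  have young := Real.young_inequality_of_nonneg (mul_nonneg hεq hA) (Real.rpow_nonneg hqB q⁻¹) hpq
  rw [show p * B / (p - 1) = q * B by rw [hq]; ring, show (p - 1) / p = q⁻¹ by rw [hq, inv_div]]
  calc A * (q * B) ^ q⁻¹
      = ε ^ q⁻¹ * A * (q * B / ε) ^ q⁻¹ := by
        rw [Real.div_rpow (mul_nonneg hpq.symm.nonneg hB) hε.le]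
        field_simp
    _ ≤ (ε ^ q⁻¹ * A) ^ p / p + ((q * B / ε) ^ q⁻¹) ^ q / q := young
    _ = ε ^ (p - 1) * A ^ p / p + B / ε := by
        rw [Real.mul_rpow hεq hA, ← Real.rpow_mul hε.le, ← Real.rpow_mul hqB,
          inv_mul_cancel₀ hq₀, Real.rpow_one, show q⁻¹ * p = p - 1 by rw [hq]; field_simp]
        field_simp

theorem abs_integral_le_integral_abs_deriv_mul_comp {u u' g : ℝ → ℝ} {c d : ℝ} (hcd : c ≤ d)
    (hu : ContinuousOn u (Icc c d)) (hderiv : ∀ x ∈ Ioo c d, HasDerivAt u (u' x) x)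
    (hu' : ContinuousOn u' (Icc c d)) (hg : Continuous g) :
    |∫ s in u c..u d, g s| ≤ ∫ x in c..d, |u' x| * |g (u x)| := by
  rw [← integral_comp_mul_deriv'' (by rwa [uIcc_of_le hcd])
    (fun x hx ↦ (hderiv x (by rwa [min_eq_left hcd, max_eq_right hcd] at hx)).hasDerivWithinAt)
    (by rwa [uIcc_of_le hcd]) hg.continuousOn]
  simpa only [Function.comp, abs_mul, mul_comm] using
    abs_integral_le_integral_abs (f := fun x ↦ g (u x) * u' x) (μ := volume) hcd

theorem abs_integral_rpow_le_integral_energy {u u' F : ℝ → ℝ} {c d p ε : ℝ} (hcd : c ≤ d)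
    (hp : 1 < p) (hε : 0 < ε) (hF : Continuous F) (hF₀ : ∀ s, 0 ≤ F s)
    (hu : ContinuousOn u (Icc c d)) (hderiv : ∀ x ∈ Ioo c d, HasDerivAt u (u' x) x)
    (hu' : ContinuousOn u' (Icc c d)) :
    |∫ s in u c..u d, (p * F s / (p - 1)) ^ ((p - 1) / p)| ≤
      ∫ x in c..d, (ε ^ (p - 1) * |u' x| ^ p / p + F (u x) / ε) := by
  have hp₀ : 0 < p := one_pos.trans hp
  have hp₁ : 0 < p - 1 := sub_pos.2 hp
  have hg : Continuous fun s ↦ (p * F s / (p - 1)) ^ ((p - 1) / p) :=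
    (hF.const_mul p).div_const _ |>.rpow_const fun _ ↦ .inr (div_nonneg hp₁.le hp₀.le)
  refine (abs_integral_le_integral_abs_deriv_mul_comp hcd hu hderiv hu' hg).trans <|
    integral_mono_on hcd ?_ ?_ fun x _ ↦ ?_
  · exact (hu'.abs.mul (hg.comp_continuousOn hu).abs).intervalIntegrable_of_Icc hcd
  · exact ((((hu'.abs.rpow_const fun _ _ ↦ .inr hp₀.le).const_smul (ε ^ (p - 1))).div_const p).add
      ((hF.comp_continuousOn hu).div_const ε)).intervalIntegrable_of_Icc hcd
  · rw [abs_of_nonneg (Real.rpow_nonneg (div_nonneg (mul_nonneg hp₀.le (hF₀ _)) hp₁.le) _)]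
    exact mul_rpow_le_young_of_eps hp hε (abs_nonneg _) (hF₀ _)

theorem ContDiffOn.hasDerivAt_derivWithin_Icc {u : ℝ → ℝ} {a b x : ℝ}
    (hu : ContDiffOn ℝ 1 u (Icc a b)) (hx : x ∈ Ioo a b) :
    HasDerivAt u (derivWithin u (Icc a b) x) x :=
  (hu.differentiableOn one_ne_zero x (Ioo_subset_Icc_self hx)).hasDerivWithinAt.hasDerivAt
    (Icc_mem_nhds hx.1 hx.2)

theorem energy_lower_bound_interval (a b c d p ε : ℝ)
    (hac : a ≤ c) (hcd : c < d) (hdb : d ≤ b) (hp : 1 < p) (hε : 0 < ε)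
    (F : ℝ → ℝ) (hFc : Continuous F) (hFnn : ∀ u, 0 ≤ F u)
    (u : ℝ → ℝ) (hu : ContDiffOn ℝ 1 u (Set.Icc a b)) :
    |∫ s in (u c)..(u d), (p * F s / (p - 1)) ^ ((p - 1) / p)| ≤
      ∫ x in c..d, (ε ^ (p - 1) * |deriv u x| ^ p / p + F (u x) / ε) := by
  have hIcc : Icc c d ⊆ Icc a b := Icc_subset_Icc hac hdb
  -- `deriv u` may be junk at `c = a` or `d = b`; the one-sided derivative is continuous up to them
  have hu' : ContinuousOn (derivWithin u (Icc a b)) (Icc c d) :=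
    (hu.continuousOn_derivWithin (uniqueDiffOn_Icc (hac.trans_lt (hcd.trans_le hdb))) le_rfl).mono
      hIcc
  have hderiv : ∀ x ∈ Ioo c d, HasDerivAt u (derivWithin u (Icc a b) x) x := fun x hx ↦
    hu.hasDerivAt_derivWithin_Icc (Ioo_subset_Ioo hac hdb hx)
  calc _ ≤ ∫ x in c..d, (ε ^ (p - 1) * |derivWithin u (Icc a b) x| ^ p / p + F (u x) / ε) :=
        abs_integral_rpow_le_integral_energy hcd.le hp hε hFc hFnn (hu.continuousOn.mono hIcc)
          hderiv hu'
    _ = _ := integral_congr_Ioo_of_le hcd.le fun x hx ↦ by simp only [(hderiv x hx).deriv]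
end

section
/- Let g : [0,1) → ℝ, g(s̄) = ∫₀^{s̄} (F(s) - F(s̄))^{-1/p} ds with F(u) = (1/(2n))(1-u²)^n, n > 1, p > 2. Then for each s̄ ∈ (0,1) the integral converges (is finite), and lim_{s̄→0⁺} g(s̄) = 0. -/
open MeasureTheory Set Filter Topology

/-! Convexity of `x ↦ x ^ n` gives the linear lower bound
`F s - F t ≥ t (1 - t²)^(n-1) / 2 · (t - s)` for `0 ≤ s ≤ t < 1`, so the integrand is
dominated by a multiple of `(t - s)^(-1/p)`, integrable since `1/p < 1`. Integrating the bound gives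
`g t ≤ ((1 - t²)^(n-1) / 2)^(-1/p) · t^(1 - 2/p) / (1 - 1/p)`, which tends to `0` as `p > 2`. -/

lemma mul_rpow_sub_one_mul_sub_le_rpow_sub_rpow {n a b : ℝ} (hn : 1 ≤ n) (hb : 0 ≤ b)
    (hba : b ≤ a) : n * b ^ (n - 1) * (a - b) ≤ a ^ n - b ^ n := by
  rcases hba.eq_or_lt with rfl | hlt
  · simp
  have h := (convexOn_rpow hn).le_slope_of_hasDerivAt hb (hb.trans hlt.le) hlt
    (Real.hasDerivAt_rpow_const (Or.inr hn))
  rwa [slope_def_field, le_div_iff₀ (sub_pos.2 hlt)] at h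

lemma integrableOn_Ioo_sub_rpow {a b r : ℝ} (hr : -1 < r) :
    IntegrableOn (fun s => (b - s) ^ r) (Ioo a b) := by
  have h := (intervalIntegral.intervalIntegrable_rpow' hr (a := 0) (b := b - a)).comp_sub_left b
  simp only [sub_zero, sub_sub_cancel] at h
  exact h.symm.def'.mono_set (Ioo_subset_Ioc_self.trans Ioc_subset_uIoc)

lemma integral_Ioo_sub_rpow {a b r : ℝ} (hab : a ≤ b) (hr : -1 < r) :
    ∫ s in Ioo a b, (b - s) ^ r = (b - a) ^ (r + 1) / (r + 1) := by
  rw [← integral_Ioc_eq_integral_Ioo, ← intervalIntegral.integral_of_le hab,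
    intervalIntegral.integral_comp_sub_left (fun u : ℝ => u ^ r), sub_self,
    integral_rpow (Or.inl hr), Real.zero_rpow (by linarith), sub_zero]

section RpowNegOfLinearLowerBound

variable {f : ℝ → ℝ} {a b C q : ℝ}

lemma rpow_neg_le_of_mul_sub_le (hC : 0 < C) (hq : 0 ≤ q) {s : ℝ} (hs : s < b)
    (hlb : C * (b - s) ≤ f s) : f s ^ (-q) ≤ C ^ (-q) * (b - s) ^ (-q) := by
  rw [← Real.mul_rpow hC.le (sub_pos.2 hs).le]
  exact Real.rpow_le_rpow_of_nonpos (mul_pos hC (sub_pos.2 hs)) hlb (neg_nonpos.2 hq)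

lemma integrableOn_rpow_neg_of_mul_sub_le (hC : 0 < C) (hq0 : 0 ≤ q) (hq1 : q < 1)
    (hf : Measurable f) (hlb : ∀ s ∈ Ioo a b, C * (b - s) ≤ f s) :
    IntegrableOn (fun s => f s ^ (-q)) (Ioo a b) := by
  refine ((integrableOn_Ioo_sub_rpow (r := -q) (by linarith)).const_mul (C ^ (-q))).mono'
    (hf.pow_const _).aestronglyMeasurable ?_
  refine (ae_restrict_iff' measurableSet_Ioo).2 (Eventually.of_forall fun s hs => ?_)
  have hfs : 0 < f s := (mul_pos hC (sub_pos.2 hs.2)).trans_le (hlb s hs)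
  rw [Real.norm_of_nonneg (Real.rpow_nonneg hfs.le _)]
  exact rpow_neg_le_of_mul_sub_le hC hq0 hs.2 (hlb s hs)

lemma setIntegral_rpow_neg_le_of_mul_sub_le (hab : a ≤ b) (hC : 0 < C) (hq0 : 0 ≤ q)
    (hq1 : q < 1) (hf : Measurable f) (hlb : ∀ s ∈ Ioo a b, C * (b - s) ≤ f s) :
    ∫ s in Ioo a b, f s ^ (-q) ≤ C ^ (-q) * ((b - a) ^ (1 - q) / (1 - q)) := by
  have hr : -1 < -q := by linarith
  calc ∫ s in Ioo a b, f s ^ (-q)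
      ≤ ∫ s in Ioo a b, C ^ (-q) * (b - s) ^ (-q) :=
        setIntegral_mono_on (integrableOn_rpow_neg_of_mul_sub_le hC hq0 hq1 hf hlb)
          ((integrableOn_Ioo_sub_rpow hr).const_mul _) measurableSet_Ioo
          fun s hs => rpow_neg_le_of_mul_sub_le hC hq0 hs.2 (hlb s hs)
    _ = C ^ (-q) * ((b - a) ^ (1 - q) / (1 - q)) := by
        rw [integral_const_mul, integral_Ioo_sub_rpow hab hr, neg_add_eq_sub]

end RpowNegOfLinearLowerBound

noncomputable def potential (n u : ℝ) : ℝ := 1 / (2 * n) * (1 - u ^ 2) ^ n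

lemma mul_sub_le_potential_sub {n s t : ℝ} (hn : 1 ≤ n) (hs : 0 ≤ s) (hst : s ≤ t)
    (ht : t < 1) : t * ((1 - t ^ 2) ^ (n - 1) / 2) * (t - s) ≤ potential n s - potential n t := by
  have htangent := mul_rpow_sub_one_mul_sub_le_rpow_sub_rpow hn
    (by nlinarith : 0 ≤ 1 - t ^ 2) (by nlinarith : 1 - t ^ 2 ≤ 1 - s ^ 2)
  have hsq : t * (t - s) ≤ (1 - s ^ 2) - (1 - t ^ 2) := by nlinarith
  have hB : 0 ≤ (1 - t ^ 2) ^ (n - 1) := Real.rpow_nonneg (by nlinarith) _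
  have hn0 : 0 < n := by linarith
  unfold potential
  calc t * ((1 - t ^ 2) ^ (n - 1) / 2) * (t - s)
      ≤ 1 / (2 * n) * (n * (1 - t ^ 2) ^ (n - 1) * ((1 - s ^ 2) - (1 - t ^ 2))) := by
        rw [show 1 / (2 * n) * (n * (1 - t ^ 2) ^ (n - 1) * ((1 - s ^ 2) - (1 - t ^ 2)))
          = (1 - t ^ 2) ^ (n - 1) / 2 * ((1 - s ^ 2) - (1 - t ^ 2)) by field_simp]
        nlinarith
    _ ≤ 1 / (2 * n) * (1 - s ^ 2) ^ n - 1 / (2 * n) * (1 - t ^ 2) ^ n := by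
        rw [← mul_sub]; gcongr

lemma tendsto_period_integral_bound_nhdsGT_zero {n q : ℝ} (hq : q < 1 / 2) :
    Tendsto (fun t => (t * ((1 - t ^ 2) ^ (n - 1) / 2)) ^ (-q) * (t ^ (1 - q) / (1 - q)))
      (𝓝[>] 0) (𝓝 0) := by
  have hcont : ContinuousAt
      (fun t : ℝ => ((1 - t ^ 2) ^ (n - 1) / 2) ^ (-q) * t ^ (1 - 2 * q) / (1 - q)) 0 := by
    fun_prop (disch := first | (right; linarith) | (left; norm_num) | (apply ne_of_gt; linarith))
  have h0 := hcont.tendsto.mono_left (nhdsWithin_le_nhds (s := Ioi 0))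
  rw [Real.zero_rpow (by linarith), mul_zero, zero_div] at h0
  refine h0.congr' (eventually_of_mem (Ioo_mem_nhdsGT one_pos) fun t ht => ?_)
  have hB : 0 ≤ (1 - t ^ 2) ^ (n - 1) / 2 := by
    have : 0 ≤ 1 - t ^ 2 := by nlinarith [ht.1, ht.2]
    positivity
  dsimp only
  rw [Real.mul_rpow ht.1.le hB, show 1 - 2 * q = -q + (1 - q) by ring,
    Real.rpow_add ht.1]
  ring

theorem period_integral_converges_and_vanishes (n p : ℝ) (hn : 1 < n) (hp : 2 < p)
    (F : ℝ → ℝ) (hF : ∀ u, F u = (1 / (2 * n)) * (1 - u ^ 2) ^ n) :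
    (∀ sbar ∈ Ioo (0 : ℝ) 1,
      IntegrableOn (fun s => (F s - F sbar) ^ (-(1 / p))) (Ioo 0 sbar)) ∧
      Tendsto (fun sbar => ∫ s in Ioo 0 sbar, (F s - F sbar) ^ (-(1 / p)))
        (nhdsWithin 0 (Ioi 0)) (nhds 0) := by
  obtain rfl : F = potential n := funext hF
  have hq0 : 0 ≤ 1 / p := by positivity
  have hq : 1 / p < 1 / 2 := one_div_lt_one_div_of_lt two_pos hp
  have hC : ∀ t ∈ Ioo (0 : ℝ) 1, 0 < t * ((1 - t ^ 2) ^ (n - 1) / 2) := fun t ht => by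
    have : 0 < 1 - t ^ 2 := by nlinarith [ht.1, ht.2]
    have := ht.1
    positivity
  have hlb : ∀ t ∈ Ioo (0 : ℝ) 1, ∀ s ∈ Ioo 0 t,
      t * ((1 - t ^ 2) ^ (n - 1) / 2) * (t - s) ≤ potential n s - potential n t :=
    fun t ht s hs => mul_sub_le_potential_sub hn.le hs.1.le hs.2.le ht.2
  have hmeas : ∀ t, Measurable fun s => potential n s - potential n t := by
    intro t; unfold potential; fun_prop
  refine ⟨fun t ht => integrableOn_rpow_neg_of_mul_sub_le (hC t ht) hq0 (by linarith)
    (hmeas t) (hlb t ht), ?_⟩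
  refine tendsto_of_tendsto_of_tendsto_of_le_of_le' tendsto_const_nhds
    (tendsto_period_integral_bound_nhdsGT_zero (n := n) hq) ?_ ?_
  · filter_upwards [Ioo_mem_nhdsGT one_pos] with t ht
    refine setIntegral_nonneg measurableSet_Ioo fun s hs => Real.rpow_nonneg ?_ _
    exact (mul_nonneg (hC t ht).le (sub_nonneg.2 hs.2.le)).trans (hlb t ht s hs)
  · filter_upwards [Ioo_mem_nhdsGT one_pos] with t ht
    simpa using setIntegral_rpow_neg_le_of_mul_sub_le ht.1.le (hC t ht) hq0 (by linarith)
      (hmeas t) (hlb t ht)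
end
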